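/- arXiv:1610.05500 — 2 statements merged into one kernel-verified Lean document; each statement's English description precedes it below -/
import Mathlib

section
/- Let γ₁, γ₂, l > 0 and let r₁, r₂, r₃ be the complex roots of X³ + (γ₁+γ₂)X² + (l²+1+γ₁γ₂)X + γ₁l² + γ₂ with r₁ real and r₁ ∈ (−(γ₁+γ₂), 0). Then Re(r₂) = Re(r₃) = −(r₁+γ₁+γ₂)/2 < 0 whenever r₂ and r₃ are non-real complex conjugates, and if r₂, r₃ are real then r₂ < 0 and r₃ < 0. In all cases, every root of the cubic has strictly negative real part. -/
/-! Since r₁ is real, Vieta's formulas make s = r₂ + r₃ = -(γ₁ + γ₂) - r₁ and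
p = r₂ r₃ = -(γ₁ l² + γ₂) / r₁ real, and the bounds on r₁ give s < 0 < p. A pair of complex
numbers with real sum s and real product p is either a real pair, both negative since s < 0 < p,
or a conjugate pair with common real part s / 2 < 0. -/

section Vieta

variable {R : Type*} [CommRing R] {a b c u v w : R}

theorem add_roots_of_cubic_eq [NeZero (2 : R)] [NoZeroDivisors R]
    (h : ∀ X : R, X ^ 3 + a * X ^ 2 + b * X + c = (X - u) * (X - v) * (X - w)) :
    u + v + w = -a := by
  have h2 : (2 : R) * (u + v + w + a) = 0 := by
    linear_combination h 1 + h (-1) - 2 * h 0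
  exact eq_neg_of_add_eq_zero_left <| (mul_eq_zero.mp h2).resolve_left two_ne_zero

theorem mul_roots_of_cubic_eq
    (h : ∀ X : R, X ^ 3 + a * X ^ 2 + b * X + c = (X - u) * (X - v) * (X - w)) :
    u * v * w = -c := by
  linear_combination h 0

end Vieta

theorem neg_and_neg_of_add_neg_of_mul_pos {a b : ℝ} (hs : a + b < 0) (hp : 0 < a * b) :
    a < 0 ∧ b < 0 :=
  (pos_and_pos_or_neg_and_neg_of_mul_pos hp).resolve_left fun ⟨ha, hb⟩ => by linarith

theorem Complex.re_neg_of_add_eq_ofReal_of_mul_eq_ofReal {z w : ℂ} {s p : ℝ}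
    (hs : z + w = s) (hp : z * w = p) (hs₀ : s < 0) (hp₀ : 0 < p) :
    z.re < 0 ∧ w.re < 0 := by
  have hre : z.re + w.re = s := by simpa using congrArg re hs
  have him : z.im + w.im = 0 := by simpa using congrArg im hs
  have hmul_re : z.re * w.re - z.im * w.im = p := by simpa using congrArg re hp
  have hmul_im : z.re * w.im + z.im * w.re = 0 := by simpa using congrArg im hp
  have hreal_or_conj : z.im * (w.re - z.re) = 0 := by linear_combination hmul_im - z.re * him
  rcases mul_eq_zero.mp hreal_or_conj with hz | hzw
  · have hw : w.im = 0 := by linarith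
    rw [hz, hw] at hmul_re
    exact neg_and_neg_of_add_neg_of_mul_pos (by linarith) (by linarith)
  · constructor <;> linarith

theorem cubic_roots_negative_re_general (γ₁ γ₂ l : ℝ) (hγ₁ : 0 < γ₁) (hγ₂ : 0 < γ₂)
    (r₁ : ℝ) (r₂ r₃ : ℂ)
    (hr₁ : r₁ ∈ Set.Ioo (-(γ₁ + γ₂)) 0)
    (hfact : ∀ X : ℂ,
      X ^ 3 + ((γ₁ : ℂ) + γ₂) * X ^ 2 + ((l : ℂ) ^ 2 + 1 + γ₁ * γ₂) * X + (γ₁ : ℂ) * l ^ 2 + γ₂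
        = (X - r₁) * (X - r₂) * (X - r₃)) :
    ((r₂.im ≠ 0 ∧ r₂ = (starRingEnd ℂ) r₃) →
        (r₂.re = -(r₁ + γ₁ + γ₂) / 2 ∧ r₃.re = -(r₁ + γ₁ + γ₂) / 2 ∧
          -(r₁ + γ₁ + γ₂) / 2 < 0)) ∧
    ((r₂.im = 0 ∧ r₃.im = 0) → (r₂.re < 0 ∧ r₃.re < 0)) ∧
    (r₁ < 0 ∧ r₂.re < 0 ∧ r₃.re < 0) := by
  obtain ⟨hr₁_lower, hr₁_neg⟩ := hr₁
  have hcubic (X : ℂ) : X ^ 3 + ((γ₁ : ℂ) + γ₂) * X ^ 2 + ((l : ℂ) ^ 2 + 1 + γ₁ * γ₂) * X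
      + ((γ₁ : ℂ) * l ^ 2 + γ₂) = (X - r₁) * (X - r₂) * (X - r₃) := by
    rw [← hfact]; ring
  have hsum : r₂ + r₃ = ((-(γ₁ + γ₂) - r₁ : ℝ) : ℂ) := by
    push_cast; linear_combination add_roots_of_cubic_eq hcubic
  have hprod : r₂ * r₃ = ((-(γ₁ * l ^ 2 + γ₂) / r₁ : ℝ) : ℂ) := by
    push_cast
    rw [eq_div_iff (by exact_mod_cast hr₁_neg.ne)]
    linear_combination mul_roots_of_cubic_eq hcubic
  have hprod_pos : 0 < -(γ₁ * l ^ 2 + γ₂) / r₁ :=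
    div_pos_of_neg_of_neg (by nlinarith [sq_nonneg l]) hr₁_neg
  have hneg := Complex.re_neg_of_add_eq_ofReal_of_mul_eq_ofReal hsum hprod (by linarith) hprod_pos
  refine ⟨?_, fun _ => hneg, hr₁_neg, hneg⟩
  rintro ⟨-, hconj⟩
  have hre : r₂.re = r₃.re := by rw [hconj, Complex.conj_re]
  have hsum_re : r₂.re + r₃.re = -(γ₁ + γ₂) - r₁ := by simpa using congrArg Complex.re hsum
  refine ⟨?_, ?_, ?_⟩ <;> linarith

theorem cubic_roots_negative_re (γ₁ γ₂ l : ℝ) (hγ₁ : 0 < γ₁) (hγ₂ : 0 < γ₂) (hl : 0 < l)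
    (r₁ : ℝ) (r₂ r₃ : ℂ)
    (hr₁ : r₁ ∈ Set.Ioo (-(γ₁ + γ₂)) 0)
    (hfact : ∀ X : ℂ,
      X ^ 3 + ((γ₁ : ℂ) + γ₂) * X ^ 2 + ((l : ℂ) ^ 2 + 1 + γ₁ * γ₂) * X + (γ₁ : ℂ) * l ^ 2 + γ₂
        = (X - r₁) * (X - r₂) * (X - r₃)) :
    ((r₂.im ≠ 0 ∧ r₂ = (starRingEnd ℂ) r₃) →
        (r₂.re = -(r₁ + γ₁ + γ₂) / 2 ∧ r₃.re = -(r₁ + γ₁ + γ₂) / 2 ∧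
          -(r₁ + γ₁ + γ₂) / 2 < 0)) ∧
    ((r₂.im = 0 ∧ r₃.im = 0) → (r₂.re < 0 ∧ r₃.re < 0)) ∧
    (r₁ < 0 ∧ r₂.re < 0 ∧ r₃.re < 0) :=
  cubic_roots_negative_re_general γ₁ γ₂ l hγ₁ hγ₂ r₁ r₂ r₃ hr₁ hfact
end

section
/- (Putzer's algorithm for n = 2.) Let A be a 2×2 complex matrix with eigenvalues λ₁, λ₂ (listed with multiplicity). Define r₁(t) = e^{λ₁ t} and r₂(t) = ∫₀ᵗ e^{λ₂(t−s)} r₁(s) ds. Then for all t ∈ ℝ, exp(tA) = r₁(t)·I + r₂(t)·(A − λ₁ I). -/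
/-!
Both sides solve `X' = A X`, `X 0 = 1`. With `N = A - λ₁ I`, Cayley–Hamilton gives
`N² = (λ₂ - λ₁) N`, and differentiating under the integral gives `r₁' = λ₁ r₁`,
`r₂' = λ₂ r₂ + r₁`; together these say `(r₁ I + r₂ N)' = A (r₁ I + r₂ N)`. Uniqueness holds
because `s ↦ exp ((t - s) A) X(s)` has derivative zero for any solution `X`.
-/

open Polynomial NormedSpace

theorem Matrix.sub_smul_one_mul_sub_smul_one_eq_zero {n R : Type*} [Fintype n] [DecidableEq n]
    [CommRing R] {A : Matrix n n R} {a b : R} (h : A.charpoly = (X - C a) * (X - C b)) :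
    (A - a • 1) * (A - b • 1) = 0 := by
  simpa [h, Algebra.algebraMap_eq_smul_one] using A.aeval_self_charpoly

theorem eq_exp_smul_of_hasDerivAt {𝔸 : Type*} [NormedRing 𝔸] [NormedAlgebra ℝ 𝔸]
    [CompleteSpace 𝔸] {a : 𝔸} {G : ℝ → 𝔸} (h0 : G 0 = 1) (hG : ∀ t, HasDerivAt G (a * G t) t)
    (t : ℝ) : G t = exp (t • a) := by
  have hderiv : ∀ s, HasDerivAt (fun s => exp ((t - s) • a) * G s) 0 s := fun s => by
    have hexp := (hasDerivAt_exp_smul_const a (t - s)).scomp s ((hasDerivAt_id s).const_sub t)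
    simpa [mul_assoc] using hexp.fun_mul (hG s)
  simpa [h0] using is_const_of_deriv_eq_zero (fun s => (hderiv s).differentiableAt)
    (fun s => (hderiv s).deriv) t 0

theorem hasDerivAt_cexp_mul_ofReal (c : ℂ) (t : ℝ) :
    HasDerivAt (fun t : ℝ => Complex.exp (c * t)) (c * Complex.exp (c * t)) t := by
  simpa [mul_comm] using ((hasDerivAt_id t).ofReal_comp.const_mul c).cexp

theorem hasDerivAt_integral_exp_mul_sub_mul {f : ℝ → ℂ} (hf : Continuous f) (c : ℂ) (t : ℝ) :
    HasDerivAt (fun t : ℝ => ∫ s in (0 : ℝ)..t, Complex.exp (c * (t - s)) * f s)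
      (c * (∫ s in (0 : ℝ)..t, Complex.exp (c * (t - s)) * f s) + f t) t := by
  have hsplit : ∀ t : ℝ, ∫ s in (0 : ℝ)..t, Complex.exp (c * (t - s)) * f s
      = Complex.exp (c * t) * ∫ s in (0 : ℝ)..t, Complex.exp (-c * s) * f s := fun t => by
    rw [← intervalIntegral.integral_const_mul]
    congr 1 with s
    rw [← mul_assoc, ← Complex.exp_add]
    ring_nf
  have hint := (by fun_prop : Continuous fun s : ℝ => Complex.exp (-c * s) * f s)
    |>.integral_hasStrictDerivAt 0 t
  simp_rw [hsplit]
  refine ((hasDerivAt_cexp_mul_ofReal c t).mul hint.hasDerivAt).congr_deriv ?_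
  rw [← mul_assoc, ← mul_assoc, ← Complex.exp_add]
  ring_nf
  simp

open Polynomial in
theorem putzer_two_by_two (A : Matrix (Fin 2) (Fin 2) ℂ) (lam₁ lam₂ : ℂ)
    (hchar : A.charpoly = (X - C lam₁) * (X - C lam₂))
    (r₁ r₂ : ℝ → ℂ)
    (hr₁ : ∀ t : ℝ, r₁ t = Complex.exp (lam₁ * t))
    (hr₂ : ∀ t : ℝ, r₂ t = ∫ s in (0:ℝ)..t, Complex.exp (lam₂ * (t - s)) * r₁ s) :
    ∀ t : ℝ, NormedSpace.exp ((t : ℂ) • A)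
      = r₁ t • (1 : Matrix (Fin 2) (Fin 2) ℂ) + r₂ t • (A - lam₁ • (1 : Matrix (Fin 2) (Fin 2) ℂ)) := by
  -- `exp` only sees the topology, so any algebra norm on matrices will do.
  let : NormedRing (Matrix (Fin 2) (Fin 2) ℂ) := Matrix.linftyOpNormedRing
  let : NormedAlgebra ℝ (Matrix (Fin 2) (Fin 2) ℂ) := Matrix.linftyOpNormedAlgebra
  let : NormedAlgebra ℂ (Matrix (Fin 2) (Fin 2) ℂ) := Matrix.linftyOpNormedAlgebra
  rw [← funext_iff] at hr₁ hr₂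
  have hr₁' : ∀ t, HasDerivAt r₁ (lam₁ * r₁ t) t := fun t => by
    simpa [hr₁] using hasDerivAt_cexp_mul_ofReal lam₁ t
  have hr₂' : ∀ t, HasDerivAt r₂ (lam₂ * r₂ t + r₁ t) t := fun t => by
    simpa [hr₂] using hasDerivAt_integral_exp_mul_sub_mul (by rw [hr₁]; fun_prop) lam₂ t
  set N := A - lam₁ • (1 : Matrix (Fin 2) (Fin 2) ℂ) with hN
  have hNN : N * N = (lam₂ - lam₁) • N := by
    have h := Matrix.sub_smul_one_mul_sub_smul_one_eq_zero hchar
    rwa [show A - lam₂ • 1 = N - (lam₂ - lam₁) • 1 by module, mul_sub, mul_smul_comm, mul_one,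
      sub_eq_zero] at h
  have hG : ∀ t, HasDerivAt (fun t => r₁ t • 1 + r₂ t • N) (A * (r₁ t • 1 + r₂ t • N)) t :=
    fun t => by
    refine (((hr₁' t).smul_const 1).add ((hr₂' t).smul_const N)).congr_deriv ?_
    rw [show A = lam₁ • 1 + N by rw [hN]; abel]
    simp only [add_mul, mul_add, smul_mul_assoc, mul_smul_comm, one_mul, mul_one, hNN]
    module
  intro t
  rw [Complex.coe_smul]
  exact (eq_exp_smul_of_hasDerivAt (by simp [hr₁, hr₂]) hG t).symm
end
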